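/- For the unduloid with parameters 0 < B < 1 and H > 0, consider the sequence of parameters tₙ = −(1/H)sin⁻¹(−B) + (4n−1)π/(2H), n ∈ ℕ, at which sin(Htₙ + 3π/2) = −B. At these points x(tₙ) = √(1−B²)/H, x'(tₙ) = −B, z'(tₙ) = √(1−B²), x''(tₙ) = 0, and the Hessian eigenvalues of |p|²/2 restricted to the surface are λ₁(tₙ) = 1 and λ₂(tₙ) = BH(B/H − z(tₙ)). Since z(tₙ) → ∞, there exists n₀ such that λ₂(tₙ) < 0 for all n ≥ n₀, and hence the strict reverse pinching |Φ|²⟨p,N⟩² > ½(2 + H⟨p,N⟩)² holds at the corresponding points for n ≥ n₀. -/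

import Mathlib

/-! With `θ = H s + 3π/2` and `r(θ) = √(1 + B² + 2B sin θ)` the profile is `x = r / H`,
`x' = B cos θ / r` and `z' = (1 + B sin θ) / r`. Both `x''` and `z''` carry the factor
`sin θ + B`, so they vanish at the points `tₙ`, where `sin θ = -B`. There the meridian
curvature `k₁ = x'z'' - x''z'` is `0` and the parallel curvature `k₂ = z'/x` equals `H`, so
`λ₁ = 1` and `λ₂ = 1 + H⟨p,N⟩ = BH(B/H - z)`. The integrand of `z` is at least
`(1 - |B|)/(1 + |B|) > 0`, so `z(tₙ) → ∞` and eventually `λ₂ < 0`. Then `λ₁λ₂ < 0`, which is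
the reverse pinching because `4λ₁λ₂ = (2 + (k₁ + k₂)⟨p,N⟩)² - (k₁ - k₂)²⟨p,N⟩²`. -/

open Real Set

/-- The unduloid profile: radial coordinate. -/
noncomputable def ux (H B : ℝ) (s : ℝ) : ℝ :=
  (1 / H) * Real.sqrt (1 + B ^ 2 + 2 * B * Real.sin (H * s + 3 * π / 2))

/-- The unduloid profile: height coordinate. -/
noncomputable def uz (H B : ℝ) (s : ℝ) : ℝ :=
  ∫ t in (3 * π / (2 * H))..(s + 3 * π / (2 * H)),
    (1 + B * Real.sin (H * t)) / Real.sqrt (1 + B ^ 2 + 2 * B * Real.sin (H * t))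

/-- The first positive zero of `x''` for the unduloid. -/
noncomputable def us₀ (H B : ℝ) : ℝ := (1 / H) * Real.arcsin (-B) + 3 * π / (2 * H)

/-- The function `g(s) = x(s) − (x'(s)/z'(s))z(s)` for the unduloid. -/
noncomputable def ug (H B : ℝ) (s : ℝ) : ℝ :=
  ux H B s - (deriv (ux H B) s / deriv (uz H B) s) * uz H B s

/-- The parameter sequence `tₙ = −(1/H)sin⁻¹(−B) + (4n−1)π/(2H)` on the unduloid. -/
noncomputable def ut (H B : ℝ) (n : ℕ) : ℝ :=
  -(1 / H) * Real.arcsin (-B) + (4 * (n : ℝ) - 1) * π / (2 * H)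

open Filter

noncomputable def unduloidRadius (B θ : ℝ) : ℝ := √(1 + B ^ 2 + 2 * B * sin θ)

noncomputable def meridianCurvature (H B s : ℝ) : ℝ :=
  deriv (ux H B) s * deriv (deriv (uz H B)) s - deriv (deriv (ux H B)) s * deriv (uz H B) s

noncomputable def parallelCurvature (H B s : ℝ) : ℝ := deriv (uz H B) s / ux H B s

noncomputable def supportFunction (H B s : ℝ) : ℝ :=
  deriv (ux H B) s * uz H B s - ux H B s * deriv (uz H B) s

theorem HasDerivAt.comp_mul_add_const {f : ℝ → ℝ} {f' a b x : ℝ}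
    (hf : HasDerivAt f f' (a * x + b)) : HasDerivAt (fun x => f (a * x + b)) (a * f') x := by
  simpa [Function.comp_def, mul_comm] using
    hf.comp x (((hasDerivAt_id x).const_mul a).add_const b)

theorem abs_mul_sin_le (B θ : ℝ) : |B * sin θ| ≤ |B| := by
  rw [abs_mul]
  exact mul_le_of_le_one_right (abs_nonneg B) (abs_sin_le_one θ)

theorem reverse_pinching_of_mul_neg {k₁ k₂ w : ℝ} (h : (1 + k₁ * w) * (1 + k₂ * w) < 0) :
    (k₁ - k₂) ^ 2 / 2 * w ^ 2 > 1 / 2 * (2 + (k₁ + k₂) * w) ^ 2 := by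
  nlinarith

section Unduloid

variable {H B : ℝ}

theorem one_sub_sq_pos (hB : |B| < 1) : 0 < 1 - B ^ 2 :=
  sub_pos.2 ((sq_lt_one_iff_abs_lt_one B).2 hB)

theorem sqrt_one_sub_sq_pos (hB : |B| < 1) : 0 < √(1 - B ^ 2) :=
  sqrt_pos.2 (one_sub_sq_pos hB)

theorem radicand_pos (hB : |B| < 1) (θ : ℝ) : 0 < 1 + B ^ 2 + 2 * B * sin θ := by
  nlinarith [(abs_le.1 (abs_mul_sin_le B θ)).1, sq_abs B]

theorem unduloidRadius_pos (hB : |B| < 1) (θ : ℝ) : 0 < unduloidRadius B θ :=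
  sqrt_pos.2 (radicand_pos hB θ)

theorem unduloidRadius_sq (hB : |B| < 1) (θ : ℝ) :
    unduloidRadius B θ ^ 2 = 1 + B ^ 2 + 2 * B * sin θ :=
  sq_sqrt (radicand_pos hB θ).le

theorem hasDerivAt_unduloidRadius (hB : |B| < 1) (θ : ℝ) :
    HasDerivAt (unduloidRadius B) (B * cos θ / unduloidRadius B θ) θ := by
  have hr := unduloidRadius_pos hB θ
  refine ((((hasDerivAt_sin θ).const_mul (2 * B)).const_add (1 + B ^ 2)).sqrt
    (radicand_pos hB θ).ne').congr_deriv ?_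
  unfold unduloidRadius at hr ⊢
  field_simp

theorem hasDerivAt_cos_div_unduloidRadius (hB : |B| < 1) (θ : ℝ) :
    HasDerivAt (fun θ => B * cos θ / unduloidRadius B θ)
      (-B * (sin θ + B) * (1 + B * sin θ) / unduloidRadius B θ ^ 3) θ := by
  have hr := unduloidRadius_pos hB θ
  refine (((hasDerivAt_cos θ).const_mul B).fun_div (hasDerivAt_unduloidRadius hB θ)
    hr.ne').congr_deriv ?_
  field_simp
  linear_combination (-B * sin θ) * unduloidRadius_sq hB θ - B ^ 2 * sin_sq_add_cos_sq θ

theorem hasDerivAt_one_add_sin_div_unduloidRadius (hB : |B| < 1) (θ : ℝ) :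
    HasDerivAt (fun θ => (1 + B * sin θ) / unduloidRadius B θ)
      (B ^ 2 * cos θ * (sin θ + B) / unduloidRadius B θ ^ 3) θ := by
  have hr := unduloidRadius_pos hB θ
  refine ((((hasDerivAt_sin θ).const_mul B).const_add 1).fun_div
    (hasDerivAt_unduloidRadius hB θ) hr.ne').congr_deriv ?_
  field_simp
  linear_combination (B * cos θ) * unduloidRadius_sq hB θ

theorem div_le_one_add_sin_div_unduloidRadius (hB : |B| < 1) (θ : ℝ) :
    (1 - |B|) / (1 + |B|) ≤ (1 + B * sin θ) / unduloidRadius B θ := by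
  have hr := unduloidRadius_pos hB θ
  obtain ⟨hlow, hup⟩ := abs_le.1 (abs_mul_sin_le B θ)
  have hr_le : unduloidRadius B θ ≤ 1 + |B| := by
    nlinarith [unduloidRadius_sq hB θ, sq_abs B, abs_nonneg B]
  calc (1 - |B|) / (1 + |B|) ≤ (1 - |B|) / unduloidRadius B θ :=
        div_le_div_of_nonneg_left (by linarith) hr hr_le
    _ ≤ (1 + B * sin θ) / unduloidRadius B θ := by gcongr; linarith

theorem continuous_one_add_sin_mul_div_unduloidRadius (hB : |B| < 1) (H : ℝ) :
    Continuous fun t => (1 + B * sin (H * t)) / unduloidRadius B (H * t) :=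
  Continuous.div (by fun_prop) (by unfold unduloidRadius; fun_prop)
    fun _ => (unduloidRadius_pos hB _).ne'

theorem hasDerivAt_ux (hH : H ≠ 0) (hB : |B| < 1) (s : ℝ) :
    HasDerivAt (ux H B)
      (B * cos (H * s + 3 * π / 2) / unduloidRadius B (H * s + 3 * π / 2)) s := by
  refine (((hasDerivAt_unduloidRadius hB _).comp_mul_add_const).const_mul (1 / H)).congr_deriv ?_
  field_simp

theorem hasDerivAt_uz (hH : H ≠ 0) (hB : |B| < 1) (s : ℝ) :
    HasDerivAt (uz H B)
      ((1 + B * sin (H * s + 3 * π / 2)) / unduloidRadius B (H * s + 3 * π / 2)) s := by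
  have h := ((continuous_one_add_sin_mul_div_unduloidRadius hB H).integral_hasStrictDerivAt
    (3 * π / (2 * H)) _).hasDerivAt.comp_add_const s (3 * π / (2 * H))
  rwa [show H * (s + 3 * π / (2 * H)) = H * s + 3 * π / 2 by field_simp] at h

theorem deriv_ux (hH : H ≠ 0) (hB : |B| < 1) :
    deriv (ux H B) =
      fun s => B * cos (H * s + 3 * π / 2) / unduloidRadius B (H * s + 3 * π / 2) :=
  funext fun s => (hasDerivAt_ux hH hB s).deriv

theorem deriv_uz (hH : H ≠ 0) (hB : |B| < 1) :
    deriv (uz H B) =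
      fun s => (1 + B * sin (H * s + 3 * π / 2)) / unduloidRadius B (H * s + 3 * π / 2) :=
  funext fun s => (hasDerivAt_uz hH hB s).deriv

theorem deriv_deriv_ux (hH : H ≠ 0) (hB : |B| < 1) (s : ℝ) :
    deriv (deriv (ux H B)) s =
      H * (-B * (sin (H * s + 3 * π / 2) + B) * (1 + B * sin (H * s + 3 * π / 2)) /
        unduloidRadius B (H * s + 3 * π / 2) ^ 3) := by
  rw [deriv_ux hH hB]
  exact (hasDerivAt_cos_div_unduloidRadius hB _).comp_mul_add_const.deriv

theorem deriv_deriv_uz (hH : H ≠ 0) (hB : |B| < 1) (s : ℝ) :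
    deriv (deriv (uz H B)) s =
      H * (B ^ 2 * cos (H * s + 3 * π / 2) * (sin (H * s + 3 * π / 2) + B) /
        unduloidRadius B (H * s + 3 * π / 2) ^ 3) := by
  rw [deriv_uz hH hB]
  exact (hasDerivAt_one_add_sin_div_unduloidRadius hB _).comp_mul_add_const.deriv

theorem mul_le_uz {s : ℝ} (hB : |B| < 1) (hs : 0 ≤ s) :
    (1 - |B|) / (1 + |B|) * s ≤ uz H B s :=
  calc (1 - |B|) / (1 + |B|) * s
      = ∫ _ in 3 * π / (2 * H)..s + 3 * π / (2 * H), (1 - |B|) / (1 + |B|) := by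
        rw [intervalIntegral.integral_const, smul_eq_mul]
        ring
    _ ≤ uz H B s :=
      intervalIntegral.integral_mono_on (by linarith) intervalIntegrable_const
        ((continuous_one_add_sin_mul_div_unduloidRadius hB H).intervalIntegrable _ _)
        fun _ _ => div_le_one_add_sin_div_unduloidRadius hB _

theorem tendsto_uz_atTop (hB : |B| < 1) : Tendsto (uz H B) atTop atTop := by
  have hc : 0 < (1 - |B|) / (1 + |B|) := div_pos (by linarith) (by positivity)
  exact tendsto_atTop_mono' _ ((eventually_ge_atTop 0).mono fun _ hs => mul_le_uz hB hs)
    (tendsto_id.const_mul_atTop hc)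

theorem tendsto_ut_atTop (hH : 0 < H) (B : ℝ) : Tendsto (ut H B) atTop atTop := by
  have hut : ut H B = fun n : ℕ => (-(1 / H) * arcsin (-B) - π / (2 * H)) + 2 * π / H * n := by
    ext n
    rw [ut]
    ring
  rw [hut]
  exact tendsto_atTop_add_const_left _ _
    (tendsto_natCast_atTop_atTop.const_mul_atTop (by positivity))

theorem mul_ut_add (hH : H ≠ 0) (n : ℕ) :
    H * ut H B n + 3 * π / 2 = arcsin B + π + n * (2 * π) := by
  rw [ut, arcsin_neg]
  field_simp
  ring

theorem sin_mul_ut_add (hH : H ≠ 0) (hB : |B| < 1) (n : ℕ) :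
    sin (H * ut H B n + 3 * π / 2) = -B := by
  obtain ⟨hB₁, hB₂⟩ := abs_lt.1 hB
  rw [mul_ut_add hH, sin_add_nat_mul_two_pi, sin_add_pi, sin_arcsin hB₁.le hB₂.le]

theorem cos_mul_ut_add (hH : H ≠ 0) (n : ℕ) :
    cos (H * ut H B n + 3 * π / 2) = -√(1 - B ^ 2) := by
  rw [mul_ut_add hH, cos_add_nat_mul_two_pi, cos_add_pi, cos_arcsin]

theorem unduloidRadius_mul_ut_add (hH : H ≠ 0) (hB : |B| < 1) (n : ℕ) :
    unduloidRadius B (H * ut H B n + 3 * π / 2) = √(1 - B ^ 2) := by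
  rw [unduloidRadius, sin_mul_ut_add hH hB]
  ring_nf

theorem ux_ut (hH : H ≠ 0) (hB : |B| < 1) (n : ℕ) :
    ux H B (ut H B n) = √(1 - B ^ 2) / H := by
  rw [ux, ← unduloidRadius, unduloidRadius_mul_ut_add hH hB]
  ring

theorem deriv_ux_ut (hH : H ≠ 0) (hB : |B| < 1) (n : ℕ) :
    deriv (ux H B) (ut H B n) = -B := by
  have hd := sqrt_one_sub_sq_pos hB
  rw [(hasDerivAt_ux hH hB _).deriv, cos_mul_ut_add hH, unduloidRadius_mul_ut_add hH hB]
  field_simp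

theorem deriv_uz_ut (hH : H ≠ 0) (hB : |B| < 1) (n : ℕ) :
    deriv (uz H B) (ut H B n) = √(1 - B ^ 2) := by
  rw [(hasDerivAt_uz hH hB _).deriv, sin_mul_ut_add hH hB, unduloidRadius_mul_ut_add hH hB,
    mul_neg, ← sq, ← sub_eq_add_neg, div_sqrt]

theorem deriv_deriv_ux_ut (hH : H ≠ 0) (hB : |B| < 1) (n : ℕ) :
    deriv (deriv (ux H B)) (ut H B n) = 0 := by
  simp [deriv_deriv_ux hH hB, sin_mul_ut_add hH hB]

theorem deriv_deriv_uz_ut (hH : H ≠ 0) (hB : |B| < 1) (n : ℕ) :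
    deriv (deriv (uz H B)) (ut H B n) = 0 := by
  simp [deriv_deriv_uz hH hB, sin_mul_ut_add hH hB]

theorem meridianCurvature_ut (hH : H ≠ 0) (hB : |B| < 1) (n : ℕ) :
    meridianCurvature H B (ut H B n) = 0 := by
  simp [meridianCurvature, deriv_deriv_ux_ut hH hB, deriv_deriv_uz_ut hH hB]

theorem parallelCurvature_ut (hH : H ≠ 0) (hB : |B| < 1) (n : ℕ) :
    parallelCurvature H B (ut H B n) = H := by
  have hd := (sqrt_one_sub_sq_pos hB).ne'
  rw [parallelCurvature, deriv_uz_ut hH hB, ux_ut hH hB]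
  field_simp

theorem supportFunction_ut (hH : H ≠ 0) (hB : |B| < 1) (n : ℕ) :
    supportFunction H B (ut H B n) = -B * uz H B (ut H B n) - (1 - B ^ 2) / H := by
  rw [supportFunction, deriv_ux_ut hH hB, deriv_uz_ut hH hB, ux_ut hH hB, div_mul_eq_mul_div,
    mul_self_sqrt (one_sub_sq_pos hB).le]

end Unduloid

/-- At the points `tₙ` of the unduloid (`H > 0`, `0 < B < 1`) one has
`sin(Htₙ + 3π/2) = −B`, `x(tₙ) = √(1−B²)/H`, `x'(tₙ) = −B`, `z'(tₙ) = √(1−B²)`,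
`x''(tₙ) = 0`, and, with `k₁ = x'z'' − x''z'`, `k₂ = z'/x`, `w = x'z − xz'`,
the Hessian eigenvalues are `λ₁(tₙ) = 1 + k₁w = 1` and
`λ₂(tₙ) = 1 + k₂w = BH(B/H − z(tₙ))`. Since `z(tₙ) → ∞`, for all large `n` one has
`λ₂(tₙ) < 0` and the strict reverse pinching `|Φ|²⟨p,N⟩² > ½(2 + H⟨p,N⟩)²` holds. -/
theorem stmt16 (H B : ℝ) (hH : 0 < H) (hB0 : 0 < B) (hB1 : B < 1) :
    (∀ n : ℕ,
      Real.sin (H * ut H B n + 3 * π / 2) = -B ∧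
      ux H B (ut H B n) = Real.sqrt (1 - B ^ 2) / H ∧
      deriv (ux H B) (ut H B n) = -B ∧
      deriv (uz H B) (ut H B n) = Real.sqrt (1 - B ^ 2) ∧
      deriv (deriv (ux H B)) (ut H B n) = 0 ∧
      (1 + (deriv (ux H B) (ut H B n) * deriv (deriv (uz H B)) (ut H B n) -
            deriv (deriv (ux H B)) (ut H B n) * deriv (uz H B) (ut H B n)) *
           (deriv (ux H B) (ut H B n) * uz H B (ut H B n) -
            ux H B (ut H B n) * deriv (uz H B) (ut H B n)) = 1) ∧
      (1 + (deriv (uz H B) (ut H B n) / ux H B (ut H B n)) *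
           (deriv (ux H B) (ut H B n) * uz H B (ut H B n) -
            ux H B (ut H B n) * deriv (uz H B) (ut H B n)) =
        B * H * (B / H - uz H B (ut H B n)))) ∧
    Filter.Tendsto (fun n : ℕ => uz H B (ut H B n)) Filter.atTop Filter.atTop ∧
    ∃ n₀ : ℕ, ∀ n ≥ n₀,
      (1 + (deriv (uz H B) (ut H B n) / ux H B (ut H B n)) *
           (deriv (ux H B) (ut H B n) * uz H B (ut H B n) -
            ux H B (ut H B n) * deriv (uz H B) (ut H B n)) < 0) ∧
      ((deriv (ux H B) (ut H B n) * deriv (deriv (uz H B)) (ut H B n) -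
          deriv (deriv (ux H B)) (ut H B n) * deriv (uz H B) (ut H B n) -
          deriv (uz H B) (ut H B n) / ux H B (ut H B n)) ^ 2 / 2 *
        (deriv (ux H B) (ut H B n) * uz H B (ut H B n) -
          ux H B (ut H B n) * deriv (uz H B) (ut H B n)) ^ 2 >
       (1 / 2) * (2 + (deriv (ux H B) (ut H B n) * deriv (deriv (uz H B)) (ut H B n) -
          deriv (deriv (ux H B)) (ut H B n) * deriv (uz H B) (ut H B n) +
          deriv (uz H B) (ut H B n) / ux H B (ut H B n)) *
        (deriv (ux H B) (ut H B n) * uz H B (ut H B n) -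
          ux H B (ut H B n) * deriv (uz H B) (ut H B n))) ^ 2) := by
  have hB : |B| < 1 := abs_lt.2 ⟨by linarith, hB1⟩
  have heig₁ (n : ℕ) :
      1 + meridianCurvature H B (ut H B n) * supportFunction H B (ut H B n) = 1 := by
    rw [meridianCurvature_ut hH.ne' hB, zero_mul, add_zero]
  have heig₂ (n : ℕ) : 1 + parallelCurvature H B (ut H B n) * supportFunction H B (ut H B n) =
      B * H * (B / H - uz H B (ut H B n)) := by
    rw [parallelCurvature_ut hH.ne' hB, supportFunction_ut hH.ne' hB]
    field_simp
    ring
  have hz := (tendsto_uz_atTop (H := H) hB).comp (tendsto_ut_atTop hH B)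
  refine ⟨fun n => ⟨sin_mul_ut_add hH.ne' hB n, ux_ut hH.ne' hB n, deriv_ux_ut hH.ne' hB n,
    deriv_uz_ut hH.ne' hB n, deriv_deriv_ux_ut hH.ne' hB n, heig₁ n, heig₂ n⟩, hz, ?_⟩
  obtain ⟨n₀, hn₀⟩ := eventually_atTop.1 (hz.eventually_gt_atTop (B / H))
  refine ⟨n₀, fun n hn => ?_⟩
  have heig₂_neg : 1 + parallelCurvature H B (ut H B n) * supportFunction H B (ut H B n) < 0 := by
    rw [heig₂]
    exact mul_neg_of_pos_of_neg (by positivity) (sub_neg.2 (hn₀ n hn))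
  have heig_mul : (1 + meridianCurvature H B (ut H B n) * supportFunction H B (ut H B n)) *
      (1 + parallelCurvature H B (ut H B n) * supportFunction H B (ut H B n)) < 0 := by
    rwa [heig₁, one_mul]
  exact ⟨heig₂_neg, reverse_pinching_of_mul_neg heig_mul⟩
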